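/- arXiv:2201.08301 — 2 statements merged into one kernel-verified Lean document; each statement's English description precedes it below -/
import Mathlib

section
/- For a natural number n ≥ 1 with n ≠ 2 and y₀ ≠ 0, the function w(t) = (y₀^(n+1)/(2-n))·((1 + 2·t·y₀²)^(1 - n/2) - 1)/(1 + 2·t·y₀²)^(3/2) satisfies w'(t) = -3·y(t)²·w(t) + y(t)^(n+3) with w(0) = 0, where y(t) = y₀/√(1 + 2·t·y₀²), for all t ≥ 0. -/
/-!
With `A t = 1 + 2 t y₀²` one has `y² = y₀² / A` and `A' = 2 y₀²`, so the coefficient `-3 y²` is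
`-(3/2) A' / A`, the logarithmic derivative of `A^(-3/2)`. Hence the quotient rule applied to
`w = C (A^p - 1) / A^(3/2)` produces exactly the term `-3 y² w`, and the remaining term
`C A' p A^(p - 5/2)` equals `y^(n+3) = y₀^(n+3) / √A^(n+3)` for `p = 1 - n/2`, `C = y₀^(n+1) / (2 - n)`.
-/

theorem HasDerivAt.const_mul_rpow_sub_one_div_rpow {f : ℝ → ℝ} {f' t : ℝ}
    (hf : HasDerivAt f f' t) (ht : 0 < f t) (C p q : ℝ) :
    HasDerivAt (fun s => C * (f s ^ p - 1) / f s ^ q)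
      (C * f' * p * f t ^ (p - 1 - q) - q * f' / f t * (C * (f t ^ p - 1) / f t ^ q)) t := by
  have hq : f t ^ q ≠ 0 := (Real.rpow_pos_of_pos ht q).ne'
  refine ((((hf.rpow_const (.inl ht.ne')).sub_const 1).const_mul C).div
    (hf.rpow_const (.inl ht.ne')) hq).congr_deriv ?_
  simp only [Real.rpow_sub ht (p - 1) q, Real.rpow_sub_one ht.ne']
  field_simp

theorem supercritical_pitchfork_sensitivity_alphan_general (y₀ : ℝ)
    (n : ℕ) (hn2 : n ≠ 2) :
    (∀ t : ℝ, 0 ≤ t →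
      HasDerivAt
        (fun s => y₀ ^ (n + 1) / (2 - (n : ℝ)) *
          ((1 + 2 * s * y₀ ^ 2) ^ ((1 : ℝ) - n / 2) - 1) /
          (1 + 2 * s * y₀ ^ 2) ^ ((3 : ℝ) / 2))
        (-3 * (y₀ / Real.sqrt (1 + 2 * t * y₀ ^ 2)) ^ 2 *
            (y₀ ^ (n + 1) / (2 - (n : ℝ)) *
              ((1 + 2 * t * y₀ ^ 2) ^ ((1 : ℝ) - n / 2) - 1) /
              (1 + 2 * t * y₀ ^ 2) ^ ((3 : ℝ) / 2)) +
          (y₀ / Real.sqrt (1 + 2 * t * y₀ ^ 2)) ^ (n + 3)) t) ∧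
    y₀ ^ (n + 1) / (2 - (n : ℝ)) *
      ((1 + 2 * 0 * y₀ ^ 2) ^ ((1 : ℝ) - n / 2) - 1) /
      (1 + 2 * 0 * y₀ ^ 2) ^ ((3 : ℝ) / 2) = 0 := by
  refine ⟨fun t ht => ?_, by norm_num⟩
  have hA : 0 < 1 + 2 * t * y₀ ^ 2 := by positivity
  have h2n : (2 : ℝ) - n ≠ 0 := sub_ne_zero.2 (by exact_mod_cast hn2.symm)
  have hsqrt : √(1 + 2 * t * y₀ ^ 2) ≠ 0 := (Real.sqrt_pos.2 hA).ne'
  have hA' : HasDerivAt (fun s => 1 + 2 * s * y₀ ^ 2) (2 * y₀ ^ 2) t := by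
    simpa using (((hasDerivAt_id t).const_mul 2).mul_const (y₀ ^ 2)).const_add 1
  refine (hA'.const_mul_rpow_sub_one_div_rpow hA (y₀ ^ (n + 1) / (2 - n)) (1 - n / 2) (3 / 2)
    ).congr_deriv ?_
  have hexp : (1 : ℝ) - n / 2 - 1 - 3 / 2 = -(((n + 3 : ℕ) : ℝ) / 2) := by push_cast; ring
  rw [hexp, Real.rpow_neg hA.le, Real.rpow_div_two_eq_sqrt ((n + 3 : ℕ) : ℝ) hA.le, Real.rpow_natCast,
    div_pow, div_pow, Real.sq_sqrt hA.le]
  field_simp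
  ring

/-- For n ≥ 1, n ≠ 2, y₀ ≠ 0, the function
w(t) = (y₀^(n+1)/(2-n))·((1 + 2ty₀²)^(1-n/2) - 1)/(1 + 2ty₀²)^(3/2)
satisfies w' = -3y²w + y^(n+3), w(0) = 0, where y(t) = y₀/√(1 + 2ty₀²), for t ≥ 0. -/
theorem supercritical_pitchfork_sensitivity_alphan (y₀ : ℝ) (hy₀ : y₀ ≠ 0)
    (n : ℕ) (hn : 1 ≤ n) (hn2 : n ≠ 2) :
    (∀ t : ℝ, 0 ≤ t →
      HasDerivAt
        (fun s => y₀ ^ (n + 1) / (2 - (n : ℝ)) *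
          ((1 + 2 * s * y₀ ^ 2) ^ ((1 : ℝ) - n / 2) - 1) /
          (1 + 2 * s * y₀ ^ 2) ^ ((3 : ℝ) / 2))
        (-3 * (y₀ / Real.sqrt (1 + 2 * t * y₀ ^ 2)) ^ 2 *
            (y₀ ^ (n + 1) / (2 - (n : ℝ)) *
              ((1 + 2 * t * y₀ ^ 2) ^ ((1 : ℝ) - n / 2) - 1) /
              (1 + 2 * t * y₀ ^ 2) ^ ((3 : ℝ) / 2)) +
          (y₀ / Real.sqrt (1 + 2 * t * y₀ ^ 2)) ^ (n + 3)) t) ∧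
    y₀ ^ (n + 1) / (2 - (n : ℝ)) *
      ((1 + 2 * 0 * y₀ ^ 2) ^ ((1 : ℝ) - n / 2) - 1) /
      (1 + 2 * 0 * y₀ ^ 2) ^ ((3 : ℝ) / 2) = 0 :=
  supercritical_pitchfork_sensitivity_alphan_general y₀ n hn2
end

section
/- For y₀ ≠ 0 and any natural n ≥ 1, the supercritical pitchfork sensitivity ∂y/∂αₙ (given by w(t) = y₀³·log(1+2ty₀²)/(2(1+2ty₀²)^(3/2)) for n = 2 and w(t) = (y₀^(n+1)/(2-n))·((1+2ty₀²)^(1-n/2) - 1)/(1+2ty₀²)^(3/2) otherwise) tends to 0 as t → ∞. -/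
open Filter Topology

lemma tendsto_rpow_sub_one_div_rpow_atTop {a b : ℝ} (hab : a < b) (hb : 0 < b) :
    Tendsto (fun x : ℝ => (x ^ a - 1) / x ^ b) atTop (𝓝 0) := by
  have hdiff : Tendsto (fun x : ℝ => x ^ (-(b - a)) - x ^ (-b)) atTop (𝓝 0) := by
    simpa using (tendsto_rpow_neg_atTop (sub_pos.2 hab)).sub (tendsto_rpow_neg_atTop hb)
  refine hdiff.congr' ?_
  filter_upwards [eventually_gt_atTop 0] with x hx
  rw [sub_div, neg_sub, Real.rpow_sub hx, Real.rpow_neg hx.le, one_div]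

lemma tendsto_one_add_mul_mul_sq_atTop {c y : ℝ} (hc : 0 < c) (hy : y ≠ 0) :
    Tendsto (fun t : ℝ => 1 + c * t * y ^ 2) atTop atTop :=
  tendsto_atTop_add_const_left _ _ <|
    (tendsto_id.const_mul_atTop hc).atTop_mul_const (by positivity)

theorem supercritical_pitchfork_alphas_irrelevant_general (y₀ : ℝ) (hy₀ : y₀ ≠ 0)
    (n : ℕ) :
    Tendsto
      (fun t : ℝ =>
        if n = 2 then
          y₀ ^ 3 * Real.log (1 + 2 * t * y₀ ^ 2) /
            (2 * (1 + 2 * t * y₀ ^ 2) ^ ((3 : ℝ) / 2))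
        else
          y₀ ^ (n + 1) / (2 - (n : ℝ)) *
            ((1 + 2 * t * y₀ ^ 2) ^ ((1 : ℝ) - n / 2) - 1) /
            (1 + 2 * t * y₀ ^ 2) ^ ((3 : ℝ) / 2))
      atTop (nhds 0) := by
  have hu := tendsto_one_add_mul_mul_sq_atTop two_pos hy₀
  split_ifs
  · have hlog := (isLittleO_log_rpow_atTop (r := 3 / 2) (by norm_num)).tendsto_div_nhds_zero
    refine (mul_zero (y₀ ^ 3 / 2) ▸ (hlog.const_mul (y₀ ^ 3 / 2)).comp hu).congr fun t => ?_
    simp only [Function.comp_apply]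
    ring
  · have hpow := tendsto_rpow_sub_one_div_rpow_atTop (a := 1 - n / 2) (b := 3 / 2)
      (by linarith [n.cast_nonneg (α := ℝ)]) (by norm_num)
    simpa [Function.comp_def, mul_div_assoc] using
      (hpow.const_mul (y₀ ^ (n + 1) / (2 - (n : ℝ)))).comp hu

/-- For y₀ ≠ 0 and n ≥ 1, the supercritical pitchfork sensitivity ∂y/∂αₙ
(the n = 2 log formula, or the general power formula otherwise) tends to 0
as t → ∞: all αₙ are irrelevant directions. -/
theorem supercritical_pitchfork_alphas_irrelevant (y₀ : ℝ) (hy₀ : y₀ ≠ 0)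
    (n : ℕ) (hn : 1 ≤ n) :
    Tendsto
      (fun t : ℝ =>
        if n = 2 then
          y₀ ^ 3 * Real.log (1 + 2 * t * y₀ ^ 2) /
            (2 * (1 + 2 * t * y₀ ^ 2) ^ ((3 : ℝ) / 2))
        else
          y₀ ^ (n + 1) / (2 - (n : ℝ)) *
            ((1 + 2 * t * y₀ ^ 2) ^ ((1 : ℝ) - n / 2) - 1) /
            (1 + 2 * t * y₀ ^ 2) ^ ((3 : ℝ) / 2))
      atTop (nhds 0) :=
  supercritical_pitchfork_alphas_irrelevant_general y₀ hy₀ n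
end
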